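/- arXiv:2212.06251 — 10 statements merged into one kernel-verified Lean document; each statement's English description precedes it below -/
import Mathlib

section
/- Consider the noiseless autoregressive bandit dynamics: a finite action set A = {1,...,n}, an order k ≥ 1, and for each action a a parameter vector γ(a) = (γ_0(a), γ_1(a), ..., γ_k(a)) ∈ ℝ^{k+1} with γ_i(a) ≥ 0 for all i ∈ {0,...,k}. Given an initial context z_0 = (1, x_0, x_{-1}, ..., x_{-k+1}) and an action sequence (a_t)_{t=1}^T, rewards evolve by x_t = ⟨γ(a_t), z_{t-1}⟩ where z_{t-1} = (1, x_{t-1}, ..., x_{t-k}). Then the greedy action sequence defined by a_t ∈ argmax_{a ∈ A} ⟨γ(a), z_{t-1}⟩ (where z_{t-1} is generated by the greedy choices themselves) attains the maximum of the cumulative reward Σ_{t=1}^T x_t over all action sequences starting from the same initial context z_0. -/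
/-!
The greedy trajectory dominates every other trajectory pointwise, by strong induction on time:
if `y s ≤ x s` for all `s < t`, then nonnegativity of the autoregressive coefficients gives
`y t = ⟨γ(b t), z^y_{t-1}⟩ ≤ ⟨γ(b t), z^x_{t-1}⟩ ≤ max_a ⟨γ(a), z^x_{t-1}⟩ = x t`.
-/

open Finset

/-- The one-step prediction `⟨c, z_{t-1}⟩ = c₀ + ∑_{i=1}^k cᵢ x_{t-i}` of an AR(`k`) model. -/
def arPrediction (c : ℕ → ℝ) (k : ℕ) (x : ℤ → ℝ) (t : ℤ) : ℝ :=
  c 0 + ∑ i ∈ Icc 1 k, c i * x (t - i)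

lemma arPrediction_mono {c : ℕ → ℝ} {k : ℕ} {u v : ℤ → ℝ} {t : ℤ}
    (hc : ∀ i ∈ Icc 1 k, 0 ≤ c i) (huv : ∀ s < t, u s ≤ v s) :
    arPrediction c k u t ≤ arPrediction c k v t := by
  refine add_le_add_right (sum_le_sum fun i hi ↦ ?_) _
  have hi_pos : (0 : ℤ) < i := by have := (mem_Icc.mp hi).1; omega
  exact mul_le_mul_of_nonneg_left (huv _ (by omega)) (hc i hi)

lemma le_of_forall_arPrediction_le {α : Type*} {k : ℕ} {γ : α → ℕ → ℝ}
    (hγ : ∀ a, ∀ i ∈ Icc 1 k, 0 ≤ γ a i) {b : ℤ → α} {x y : ℤ → ℝ}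
    (hinit : ∀ s ≤ 0, y s ≤ x s)
    (hx : ∀ t, 1 ≤ t → ∀ a, arPrediction (γ a) k x t ≤ x t)
    (hy : ∀ t, 1 ≤ t → y t = arPrediction (γ (b t)) k y t) (t : ℤ) :
    y t ≤ x t := by
  induction t using Int.strongRec (m := 1) with
  | lt s hs => exact hinit s (by omega)
  | ge t ht ih =>
    calc y t = arPrediction (γ (b t)) k y t := hy t ht
      _ ≤ arPrediction (γ (b t)) k x t := arPrediction_mono (hγ (b t)) ih
      _ ≤ x t := hx t ht (b t)

theorem greedy_policy_optimal_general
    (n k T : ℕ)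
    (γ : Fin n → ℕ → ℝ)
    (hγ : ∀ (a : Fin n) (i : ℕ), i ≤ k → 0 ≤ γ a i)
    (init : ℤ → ℝ)
    -- greedy action sequence and its trajectory
    (ag : ℤ → Fin n) (x : ℤ → ℝ)
    (hx0 : ∀ s : ℤ, s ≤ 0 → x s = init s)
    (hxrec : ∀ t : ℤ, 1 ≤ t →
      x t = γ (ag t) 0 + ∑ i ∈ Finset.Icc 1 k, γ (ag t) i * x (t - i))
    (hgreedy : ∀ t : ℤ, 1 ≤ t → ∀ a : Fin n,
      γ a 0 + ∑ i ∈ Finset.Icc 1 k, γ a i * x (t - i) ≤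
        γ (ag t) 0 + ∑ i ∈ Finset.Icc 1 k, γ (ag t) i * x (t - i))
    -- an arbitrary action sequence and its trajectory from the same initial context
    (b : ℤ → Fin n) (y : ℤ → ℝ)
    (hy0 : ∀ s : ℤ, s ≤ 0 → y s = init s)
    (hyrec : ∀ t : ℤ, 1 ≤ t →
      y t = γ (b t) 0 + ∑ i ∈ Finset.Icc 1 k, γ (b t) i * y (t - i)) :
    ∑ t ∈ Finset.Icc (1 : ℤ) (T : ℤ), y t ≤ ∑ t ∈ Finset.Icc (1 : ℤ) (T : ℤ), x t := by
  have hx_ge : ∀ t, 1 ≤ t → ∀ a, arPrediction (γ a) k x t ≤ x t := fun t ht a ↦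
    (hgreedy t ht a).trans_eq (hxrec t ht).symm
  have hy_le_x : ∀ t, y t ≤ x t :=
    le_of_forall_arPrediction_le (fun a i hi ↦ hγ a i (mem_Icc.mp hi).2)
      (fun s hs ↦ (hy0 s hs).trans_le (hx0 s hs).ge) hx_ge hyrec
  exact sum_le_sum fun t _ ↦ hy_le_x t

theorem greedy_policy_optimal
    (n k T : ℕ) (hn : 1 ≤ n) (hk : 1 ≤ k)
    (γ : Fin n → ℕ → ℝ)
    (hγ : ∀ (a : Fin n) (i : ℕ), i ≤ k → 0 ≤ γ a i)
    (init : ℤ → ℝ)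
    -- greedy action sequence and its trajectory
    (ag : ℤ → Fin n) (x : ℤ → ℝ)
    (hx0 : ∀ s : ℤ, s ≤ 0 → x s = init s)
    (hxrec : ∀ t : ℤ, 1 ≤ t →
      x t = γ (ag t) 0 + ∑ i ∈ Finset.Icc 1 k, γ (ag t) i * x (t - i))
    (hgreedy : ∀ t : ℤ, 1 ≤ t → ∀ a : Fin n,
      γ a 0 + ∑ i ∈ Finset.Icc 1 k, γ a i * x (t - i) ≤
        γ (ag t) 0 + ∑ i ∈ Finset.Icc 1 k, γ (ag t) i * x (t - i))
    -- an arbitrary action sequence and its trajectory from the same initial context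
    (b : ℤ → Fin n) (y : ℤ → ℝ)
    (hy0 : ∀ s : ℤ, s ≤ 0 → y s = init s)
    (hyrec : ∀ t : ℤ, 1 ≤ t →
      y t = γ (b t) 0 + ∑ i ∈ Finset.Icc 1 k, γ (b t) i * y (t - i)) :
    ∑ t ∈ Finset.Icc (1 : ℤ) (T : ℤ), y t ≤ ∑ t ∈ Finset.Icc (1 : ℤ) (T : ℤ), x t :=
  greedy_policy_optimal_general n k T γ hγ init ag x hx0 hxrec hgreedy b y hy0 hyrec
end

section
/- Consider the noiseless autoregressive bandit dynamics with finite action set A, order k ≥ 1, and parameter vectors γ(a) ∈ ℝ^{k+1} satisfying γ_i(a) ≥ 0 for all i ∈ {0,...,k}. Define the optimal value function recursively by V_0(z) = 0 and V_T(z) = max_{a ∈ A} { ⟨γ(a), z⟩ + V_{T-1}(P(z,a)) }, where for z = (1, x_1, ..., x_k) the transition operator is P(z,a) = (1, ⟨γ(a), z⟩, x_1, ..., x_{k-1}). Then V_T is componentwise monotone: for any T ≥ 0 and any z, z̄ ∈ {1} × ℝ^k with z ⪰ z̄ (componentwise), V_T(z) ≥ V_T(z̄). -/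
/-!
STATEMENT 1: Componentwise monotonicity of the optimal value function of the noiseless
autoregressive bandit.  A context `z = (1, x_1, …, x_k)` is a vector in `ℝ^{k+1}` with
first component `1`.  The one-step reward of action `a` in context `z` is
`⟨γ(a), z⟩ = ∑ i, γ a i * z i`, the transition is
`P(z,a) = (1, ⟨γ(a), z⟩, x_1, …, x_{k-1})`, and the optimal value function is
`V_0(z) = 0`, `V_{T+1}(z) = max_a { ⟨γ(a), z⟩ + V_T(P(z,a)) }`.
-/

/-- One-step reward `⟨γ(a), z⟩`. -/
noncomputable def armValue {n k : ℕ} (γ : Fin n → Fin (k + 1) → ℝ) (a : Fin n)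
    (z : Fin (k + 1) → ℝ) : ℝ :=
  ∑ i, γ a i * z i

/-- Transition operator `P(z, a) = (1, ⟨γ(a), z⟩, z_1, …, z_{k-1})`. -/
noncomputable def transOp {n k : ℕ} (γ : Fin n → Fin (k + 1) → ℝ)
    (z : Fin (k + 1) → ℝ) (a : Fin n) : Fin (k + 1) → ℝ :=
  fun i =>
    if (i : ℕ) = 0 then 1
    else if (i : ℕ) = 1 then armValue γ a z
    else z (i - 1)

/-- Optimal value function `V_T(z)` (finite horizon, noiseless dynamics). -/
noncomputable def optVal {n k : ℕ} (γ : Fin n → Fin (k + 1) → ℝ) :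
    ℕ → (Fin (k + 1) → ℝ) → ℝ
  | 0, _ => 0
  | T + 1, z => ⨆ a : Fin n, (armValue γ a z + optVal γ T (transOp γ z a))

theorem optVal_monotone {n k : ℕ} (hn : 1 ≤ n) (hk : 1 ≤ k)
    (γ : Fin n → Fin (k + 1) → ℝ) (hγ : ∀ (a : Fin n) (i : Fin (k + 1)), 0 ≤ γ a i)
    (T : ℕ) (z zbar : Fin (k + 1) → ℝ)
    (hz0 : z 0 = 1) (hzbar0 : zbar 0 = 1)
    (hle : ∀ i : Fin (k + 1), zbar i ≤ z i) :
    optVal γ T zbar ≤ optVal γ T z := by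
  induction T generalizing z zbar with
  | zero => simp [optVal]
  | succ T ih =>
    have harm : ∀ a, armValue γ a zbar ≤ armValue γ a z := fun a =>
      Finset.sum_le_sum fun i _ => mul_le_mul_of_nonneg_left (hle i) (hγ a i)
    simp only [optVal]
    have : Nonempty (Fin n) := ⟨⟨0, hn⟩⟩
    apply ciSup_mono (Set.Finite.bddAbove (Set.finite_range _))
    intro a
    have htrans : ∀ i, transOp γ zbar a i ≤ transOp γ z a i := by
      intro i
      unfold transOp
      split_ifs with h1 h2
      · exact le_refl _
      · exact harm a
      · exact hle _
    have h0 : transOp γ z a 0 = 1 := by simp [transOp]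
    have h0' : transOp γ zbar a 0 = 1 := by simp [transOp]
    exact add_le_add (harm a) (ih _ _ h0 h0' htrans)
end

section
/- Let d ≥ 1, λ > 0, z_1, ..., z_l ∈ ℝ^d, γ ∈ ℝ^d, ξ_1, ..., ξ_l ∈ ℝ, and x_j = ⟨γ, z_j⟩ + ξ_j. Let V = λ I_d + Σ_{j=1}^l z_j z_j^T, b = Σ_{j=1}^l z_j x_j, s = Σ_{j=1}^l z_j ξ_j, and γ̂ = V^{-1} b. Then ‖γ̂ − γ‖_V ≤ √λ ‖γ‖₂ + ‖s‖_{V^{-1}}, where for a positive definite matrix M, ‖v‖_M denotes √(v^T M v). -/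
/-!
Since `b = (V - λ I) γ + s`, the error is `γ̂ - γ = V⁻¹ s - λ V⁻¹ γ`. The triangle inequality for
`‖·‖_V` splits it into `‖V⁻¹ s‖_V = ‖s‖_{V⁻¹}` and `‖λ V⁻¹ γ‖_V = λ ‖γ‖_{V⁻¹}`, and `V ≥ λ I`
gives `V⁻¹ ≤ λ⁻¹ I`, so the latter is at most `√λ ‖γ‖₂`.
-/

open Matrix

/-- Weighted 2-norm `‖v‖_M = √(vᵀ M v)` for a matrix `M`. -/
noncomputable def wnorm {d : ℕ} (M : Matrix (Fin d) (Fin d) ℝ) (v : Fin d → ℝ) : ℝ :=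
  Real.sqrt (v ⬝ᵥ (M *ᵥ v))

namespace Matrix

variable {n ι : Type*} [Fintype n]

theorem sum_vecMulVec_self_mulVec [Fintype ι] (z : ι → n → ℝ) (v : n → ℝ) :
    (∑ j, vecMulVec (z j) (z j)) *ᵥ v = ∑ j, (z j ⬝ᵥ v) • z j := by
  simp only [sum_mulVec, vecMulVec_mulVec, op_smul_eq_smul]

theorem posSemidef_sum_vecMulVec_self [Fintype ι] (z : ι → n → ℝ) :
    (∑ j, vecMulVec (z j) (z j)).PosSemidef :=
  posSemidef_sum _ fun j _ => by simpa using posSemidef_vecMulVec_self_star (z j)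

theorem PosSemidef.mul_dotProduct_self_le [DecidableEq n] {P : Matrix n n ℝ}
    (hP : P.PosSemidef) (c : ℝ) (v : n → ℝ) :
    c * (v ⬝ᵥ v) ≤ v ⬝ᵥ ((c • 1 + P) *ᵥ v) := by
  have hPv := hP.dotProduct_mulVec_nonneg v
  rw [star_trivial] at hPv
  rw [add_mulVec, smul_mulVec, one_mulVec, dotProduct_add, dotProduct_smul, smul_eq_mul]
  linarith

theorem mul_dotProduct_nonsing_inv_mulVec_le [DecidableEq n] {M : Matrix n n ℝ} {c : ℝ}
    (hc : 0 ≤ c) (hM : IsUnit M.det) (hcM : ∀ v, c * (v ⬝ᵥ v) ≤ v ⬝ᵥ (M *ᵥ v)) (w : n → ℝ) :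
    c * (w ⬝ᵥ (M⁻¹ *ᵥ w)) ≤ w ⬝ᵥ w := by
  set u := M⁻¹ *ᵥ w
  have hMu : M *ᵥ u = w := by rw [mulVec_mulVec, mul_nonsing_inv M hM, one_mulVec]
  have hu : c * (u ⬝ᵥ u) ≤ u ⬝ᵥ w := hMu ▸ hcM u
  -- `0 ≤ ‖c u - w‖²` and `c ‖u‖² ≤ ⟪u, w⟫` give `c ⟪u, w⟫ ≤ ‖w‖²`
  have hsq : 0 ≤ (c • u - w) ⬝ᵥ (c • u - w) := by
    simpa using dotProduct_self_star_nonneg (c • u - w)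
  simp only [sub_dotProduct, dotProduct_sub, smul_dotProduct, dotProduct_smul,
    smul_eq_mul, dotProduct_comm w u] at hsq
  rw [dotProduct_comm]
  nlinarith [mul_le_mul_of_nonneg_left hu hc]

end Matrix

section WeightedNorm

variable {d : ℕ}

theorem wnorm_sub_le {M : Matrix (Fin d) (Fin d) ℝ} (hM : M.PosSemidef) (a b : Fin d → ℝ) :
    wnorm M (a - b) ≤ wnorm M a + wnorm M b := by
  have hnorm (v : Fin d → ℝ) :
      wnorm M v = @norm _ (M.toSeminormedAddCommGroup hM).toNorm v := by
    rw [wnorm, dotProduct_comm]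
    rfl
  simpa only [hnorm] using @norm_sub_le _ (M.toSeminormedAddCommGroup hM).toSeminormedAddGroup a b

theorem wnorm_smul (M : Matrix (Fin d) (Fin d) ℝ) (c : ℝ) (v : Fin d → ℝ) :
    wnorm M (c • v) = |c| * wnorm M v := by
  rw [wnorm, wnorm, mulVec_smul, smul_dotProduct, dotProduct_smul, smul_eq_mul, smul_eq_mul,
    ← mul_assoc, Real.sqrt_mul (mul_self_nonneg c), Real.sqrt_mul_self_eq_abs]

theorem wnorm_nonsing_inv_mulVec {M : Matrix (Fin d) (Fin d) ℝ} (hM : IsUnit M.det)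
    (v : Fin d → ℝ) : wnorm M (M⁻¹ *ᵥ v) = wnorm M⁻¹ v := by
  rw [wnorm, wnorm, mulVec_mulVec, mul_nonsing_inv M hM, one_mulVec, dotProduct_comm]

theorem wnorm_smul_nonsing_inv_mulVec_le {M : Matrix (Fin d) (Fin d) ℝ} {c : ℝ} (hc : 0 ≤ c)
    (hM : IsUnit M.det) (hcM : ∀ v, c * (v ⬝ᵥ v) ≤ v ⬝ᵥ (M *ᵥ v)) (w : Fin d → ℝ) :
    wnorm M (c • M⁻¹ *ᵥ w) ≤ Real.sqrt c * Real.sqrt (∑ i, w i ^ 2) := by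
  calc wnorm M (c • M⁻¹ *ᵥ w) = Real.sqrt (c * (c * (w ⬝ᵥ (M⁻¹ *ᵥ w)))) := by
        rw [wnorm_smul, wnorm_nonsing_inv_mulVec hM, abs_of_nonneg hc, wnorm, ← mul_assoc,
          Real.sqrt_mul (mul_self_nonneg c), Real.sqrt_mul_self hc]
    _ ≤ Real.sqrt (c * (w ⬝ᵥ w)) :=
        Real.sqrt_le_sqrt (mul_le_mul_of_nonneg_left
          (mul_dotProduct_nonsing_inv_mulVec_le hc hM hcM w) hc)
    _ = Real.sqrt c * Real.sqrt (∑ i, w i ^ 2) := by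
        simp only [Real.sqrt_mul hc, dotProduct, sq]

end WeightedNorm

theorem ridge_regression_confidence_general
    (d l : ℕ) (lam : ℝ) (hlam : 0 < lam)
    (z : Fin l → Fin d → ℝ) (γ : Fin d → ℝ) (ξ : Fin l → ℝ)
    (x : Fin l → ℝ) (hx : ∀ j, x j = (∑ i, γ i * z j i) + ξ j)
    (V : Matrix (Fin d) (Fin d) ℝ)
    (hV : V = lam • (1 : Matrix (Fin d) (Fin d) ℝ) +
      ∑ j, Matrix.vecMulVec (z j) (z j))
    (b s γhat : Fin d → ℝ)
    (hb : b = ∑ j, x j • z j)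
    (hs : s = ∑ j, ξ j • z j)
    (hγhat : γhat = V⁻¹ *ᵥ b) :
    wnorm V (γhat - γ) ≤
      Real.sqrt lam * Real.sqrt (∑ i, (γ i) ^ 2) + wnorm V⁻¹ s := by
  have hgram := posSemidef_sum_vecMulVec_self z
  have hVpd : V.PosDef := hV ▸ (PosDef.one.smul hlam).add_posSemidef hgram
  have hdet : IsUnit V.det := (isUnit_iff_isUnit_det V).mp hVpd.isUnit
  have hcoer : ∀ v, lam * (v ⬝ᵥ v) ≤ v ⬝ᵥ (V *ᵥ v) := hV ▸ hgram.mul_dotProduct_self_le lam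
  have hbV : b = V *ᵥ γ - lam • γ + s := by
    rw [hb, hs, hV, add_mulVec, smul_mulVec, one_mulVec, sum_vecMulVec_self_mulVec,
      add_sub_cancel_left, ← Finset.sum_add_distrib]
    refine Finset.sum_congr rfl fun j _ => ?_
    rw [hx, add_smul, dotProduct_comm]
    rfl
  have herr : γhat - γ = V⁻¹ *ᵥ s - lam • V⁻¹ *ᵥ γ := by
    rw [hγhat, hbV, mulVec_add, mulVec_sub, mulVec_mulVec, nonsing_inv_mul V hdet, one_mulVec,
      mulVec_smul]
    abel
  calc wnorm V (γhat - γ) ≤ wnorm V (V⁻¹ *ᵥ s) + wnorm V (lam • V⁻¹ *ᵥ γ) :=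
        herr ▸ wnorm_sub_le hVpd.posSemidef _ _
    _ ≤ wnorm V⁻¹ s + Real.sqrt lam * Real.sqrt (∑ i, γ i ^ 2) := by
        rw [wnorm_nonsing_inv_mulVec hdet]
        gcongr
        exact wnorm_smul_nonsing_inv_mulVec_le hlam.le hdet hcoer γ
    _ = _ := add_comm _ _

theorem ridge_regression_confidence
    (d l : ℕ) (hd : 1 ≤ d) (lam : ℝ) (hlam : 0 < lam)
    (z : Fin l → Fin d → ℝ) (γ : Fin d → ℝ) (ξ : Fin l → ℝ)
    (x : Fin l → ℝ) (hx : ∀ j, x j = (∑ i, γ i * z j i) + ξ j)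
    (V : Matrix (Fin d) (Fin d) ℝ)
    (hV : V = lam • (1 : Matrix (Fin d) (Fin d) ℝ) +
      ∑ j, Matrix.vecMulVec (z j) (z j))
    (b s γhat : Fin d → ℝ)
    (hb : b = ∑ j, x j • z j)
    (hs : s = ∑ j, ξ j • z j)
    (hγhat : γhat = V⁻¹ *ᵥ b) :
    wnorm V (γhat - γ) ≤
      Real.sqrt lam * Real.sqrt (∑ i, (γ i) ^ 2) + wnorm V⁻¹ s :=
  ridge_regression_confidence_general d l lam hlam z γ ξ x hx V hV b s γhat hb hs hγhat
end

section
/- (Policy Regret Decomposition) Let k ≥ 1 and let A be an action set with parameter vectors γ(a) = (γ_0(a),...,γ_k(a)) ∈ ℝ^{k+1}. Let (ξ_t)_{t=1}^T be a sequence of real numbers (the shared noise realizations). Let two reward sequences be generated from the same initial values x*_s = x_s for s ≤ 0 by action sequences (a*_t) and (a_t): x*_t = ⟨γ(a*_t), z*_{t-1}⟩ + ξ_t and x_t = ⟨γ(a_t), z_{t-1}⟩ + ξ_t, where z*_{t-1} = (1, x*_{t-1}, ..., x*_{t-k}) and z_{t-1} = (1, x_{t-1}, ..., x_{t-k}). Then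 for every t ∈ {1,...,T}, the instantaneous policy regret r_t := x*_t − x_t satisfies r_t = Σ_{i=1}^k γ_i(a*_t) r_{t-i} + ρ_t, where ρ_t := ⟨γ(a*_t) − γ(a_t), z_{t-1}⟩ is the instantaneous external regret and r_s = 0 for s ≤ 0. -/
theorem sub_affine_sum_eq {R ι : Type*} [CommRing R] (s : Finset ι)
    (c c' e : R) (g g' y y' : ι → R) :
    (c + (∑ i ∈ s, g i * y i) + e) - (c' + (∑ i ∈ s, g' i * y' i) + e) =
      (∑ i ∈ s, g i * (y i - y' i)) + ((c - c') + ∑ i ∈ s, (g i - g' i) * y' i) := by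
  simp only [mul_sub, sub_mul, Finset.sum_sub_distrib]
  ring

theorem policy_regret_decomposition_general
    (n k T : ℕ)
    (γ : Fin n → ℕ → ℝ)
    (ξ : ℤ → ℝ)
    (astar a : ℤ → Fin n)
    (xstar x : ℤ → ℝ)
    (hxstar : ∀ t : ℤ, 1 ≤ t →
      xstar t = γ (astar t) 0 +
        (∑ i ∈ Finset.Icc 1 k, γ (astar t) i * xstar (t - i)) + ξ t)
    (hx : ∀ t : ℤ, 1 ≤ t →
      x t = γ (a t) 0 + (∑ i ∈ Finset.Icc 1 k, γ (a t) i * x (t - i)) + ξ t) :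
    ∀ t : ℤ, 1 ≤ t → t ≤ T →
      xstar t - x t =
        (∑ i ∈ Finset.Icc 1 k, γ (astar t) i * (xstar (t - i) - x (t - i))) +
        ((γ (astar t) 0 - γ (a t) 0) +
          ∑ i ∈ Finset.Icc 1 k, (γ (astar t) i - γ (a t) i) * x (t - i)) := by
  intro t ht _
  rw [hxstar t ht, hx t ht]
  exact sub_affine_sum_eq _ _ _ _ _ _ _ _

theorem policy_regret_decomposition
    (n k T : ℕ) (hk : 1 ≤ k)
    (γ : Fin n → ℕ → ℝ)
    (ξ : ℤ → ℝ)
    (astar a : ℤ → Fin n)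
    (xstar x : ℤ → ℝ)
    (hinit : ∀ s : ℤ, s ≤ 0 → xstar s = x s)
    (hxstar : ∀ t : ℤ, 1 ≤ t →
      xstar t = γ (astar t) 0 +
        (∑ i ∈ Finset.Icc 1 k, γ (astar t) i * xstar (t - i)) + ξ t)
    (hx : ∀ t : ℤ, 1 ≤ t →
      x t = γ (a t) 0 + (∑ i ∈ Finset.Icc 1 k, γ (a t) i * x (t - i)) + ξ t) :
    ∀ t : ℤ, 1 ≤ t → t ≤ T →
      xstar t - x t =
        (∑ i ∈ Finset.Icc 1 k, γ (astar t) i * (xstar (t - i) - x (t - i))) +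
        ((γ (astar t) 0 - γ (a t) 0) +
          ∑ i ∈ Finset.Icc 1 k, (γ (astar t) i - γ (a t) i) * x (t - i)) :=
  policy_regret_decomposition_general n k T γ ξ astar a xstar x hxstar hx
end

section
/- (External-to-Policy Regret Bound) Let k ≥ 1, Γ ∈ [0,1), and T ≥ 1. Let (ρ_t)_{t=1}^T be nonnegative reals and let coefficients c_{t,i} ≥ 0 for t ∈ {1,...,T}, i ∈ {1,...,k} satisfy Σ_{i=1}^k c_{t,i} ≤ Γ for every t. Define the sequence (r_t) by r_t = Σ_{i=1}^k c_{t,i} r_{t-i} + ρ_t, with r_s = 0 for s ≤ 0. Then Σ_{t=1}^T r_t ≤ (1 + Γk/(1−Γ)) Σ_{t=1}^T ρ_t. -/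
/-!
Unrolling the recurrence, `ρ_s` reaches `r_t` only through chains of lags in `[1, k]`, each
lag costing a factor at most `Γ`, and covering the distance `t - s` takes at least
`⌈(t - s)/k⌉` lags. Accordingly the convolution `x_t = ∑_{s ≤ t} Γ^⌈(t - s)/k⌉ ρ_s` is a
supersolution of the recurrence, hence dominates `r_t`. Summing over `t`, each `ρ_s` receives
total weight at most `∑_d Γ^⌈d/k⌉ = 1 + kΓ/(1 - Γ)`, since every exponent `m ≥ 1` is attained
by exactly `k` values of `d`.
-/

open Finset

theorem Finset.sum_range_mul_comp_div {M : Type*} [AddCommMonoid M] (f : ℕ → M) (k n : ℕ) :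
    ∑ e ∈ range (k * n), f (e / k) = k • ∑ q ∈ range n, f q := by
  rcases Nat.eq_zero_or_pos k with rfl | hk
  · simp
  induction n with
  | zero => simp
  | succ n ih =>
    have hblock : ∀ j ∈ range k, f ((k * n + j) / k) = f n := fun j hj => by
      rw [Nat.mul_add_div hk, Nat.div_eq_of_lt (mem_range.1 hj), add_zero]
    rw [Nat.mul_succ, sum_range_add, ih, sum_congr rfl hblock, sum_const, card_range,
      sum_range_succ, smul_add]

section Kernel

variable {Γ : ℝ} {k : ℕ}

theorem sum_range_pow_div_le (hk : 0 < k) (hΓ0 : 0 ≤ Γ) (hΓ1 : Γ < 1) (n : ℕ) :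
    ∑ e ∈ range n, Γ ^ (e / k) ≤ k / (1 - Γ) := calc
  _ ≤ ∑ e ∈ range (k * n), Γ ^ (e / k) :=
    sum_le_sum_of_subset_of_nonneg (range_subset_range.2 (Nat.le_mul_of_pos_left n hk))
      fun _ _ _ => by positivity
  _ = k * ∑ q ∈ range n, Γ ^ q := by rw [sum_range_mul_comp_div, nsmul_eq_mul]
  _ ≤ k * (1 / (1 - Γ)) := by
    gcongr
    simpa using geom_sum_Ico_le_of_lt_one (m := 0) (n := n) hΓ0 hΓ1
  _ = k / (1 - Γ) := by ring

theorem sum_range_pow_ceilDiv_le (hk : 0 < k) (hΓ0 : 0 ≤ Γ) (hΓ1 : Γ < 1) (n : ℕ) :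
    ∑ d ∈ range n, Γ ^ (d ⌈/⌉ k) ≤ 1 + Γ * k / (1 - Γ) := by
  have hbound : 0 ≤ Γ * k / (1 - Γ) := div_nonneg (by positivity) (by linarith)
  cases n with
  | zero => simp only [range_zero, sum_empty]; linarith
  | succ n =>
    have hsucc (e : ℕ) : (e + 1) ⌈/⌉ k = e / k + 1 := by
      rw [Nat.ceilDiv_eq_add_pred_div, show e + 1 + k - 1 = e + k by omega, Nat.add_div_right _ hk]
    calc ∑ d ∈ range (n + 1), Γ ^ (d ⌈/⌉ k)
        = Γ * ∑ e ∈ range n, Γ ^ (e / k) + 1 := by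
          simp only [sum_range_succ', hsucc, pow_succ', mul_sum, zero_ceilDiv, pow_zero]
      _ ≤ Γ * (k / (1 - Γ)) + 1 := by gcongr; exact sum_range_pow_div_le hk hΓ0 hΓ1 n
      _ = 1 + Γ * k / (1 - Γ) := by ring

theorem Nat.ceilDiv_le_ceilDiv_sub_add_one {d i : ℕ} (hik : i ≤ k) :
    d ⌈/⌉ k ≤ (d - i) ⌈/⌉ k + 1 := by
  rcases Nat.eq_zero_or_pos k with rfl | hk
  · simp
  rw [ceilDiv_le_iff_le_mul hk]
  have := le_smul_ceilDiv (b := d - i) hk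
  rw [smul_eq_mul] at this
  rw [mul_add_one]
  omega

theorem mul_pow_ceilDiv_sub_le (hΓ0 : 0 ≤ Γ) (hΓ1 : Γ ≤ 1) {i : ℕ} (hik : i ≤ k) (d : ℕ) :
    Γ * Γ ^ ((d - i) ⌈/⌉ k) ≤ Γ ^ (d ⌈/⌉ k) := by
  rw [← pow_succ']
  exact pow_le_pow_of_le_one hΓ0 hΓ1 (Nat.ceilDiv_le_ceilDiv_sub_add_one hik)

end Kernel

theorem sum_Icc_sum_Icc_mul_le {K : ℕ → ℝ} {C : ℝ}
    (hKC : ∀ n, ∑ d ∈ range n, K d ≤ C) {ρ : ℤ → ℝ} {a b : ℤ} (hρ : ∀ s ∈ Icc a b, 0 ≤ ρ s) :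
    ∑ t ∈ Icc a b, ∑ s ∈ Icc a t, K (t - s).toNat * ρ s ≤ C * ∑ s ∈ Icc a b, ρ s := by
  have hswap : ∀ t s, t ∈ Icc a b ∧ s ∈ Icc a t ↔ t ∈ Icc s b ∧ s ∈ Icc a b := by
    intro t s
    simp only [mem_Icc]
    constructor <;> intro h <;> omega
  rw [sum_comm' hswap, mul_sum]
  refine sum_le_sum fun s hs => ?_
  rw [← sum_mul]
  refine mul_le_mul_of_nonneg_right ?_ (hρ s hs)
  have hsb := (mem_Icc.1 hs).2
  have hshift : ∑ t ∈ Icc s b, K (t - s).toNat = ∑ d ∈ range ((b - s).toNat + 1), K d :=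
    sum_nbij' (fun t => (t - s).toNat) (fun d => s + d)
      (fun t ht => by simp only [mem_Icc, mem_range] at ht ⊢; omega)
      (fun d hd => by simp only [mem_Icc, mem_range] at hd ⊢; omega)
      (fun t ht => by simp only [mem_Icc] at ht; omega)
      (fun d _ => by omega) (fun _ _ => rfl)
  exact hshift ▸ hKC _

theorem recurrence_le_of_supersolution {k : ℕ} (hk : 1 ≤ k) {T : ℤ} {Γ : ℝ}
    {c : ℤ → ℕ → ℝ} {ρ r x : ℤ → ℝ}
    (hc : ∀ (t : ℤ) (i : ℕ), 1 ≤ t → t ≤ T → 1 ≤ i → i ≤ k → 0 ≤ c t i)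
    (hcsum : ∀ t : ℤ, 1 ≤ t → t ≤ T → ∑ i ∈ Icc 1 k, c t i ≤ Γ)
    (hr0 : ∀ s : ℤ, s ≤ 0 → r s = 0)
    (hrec : ∀ t : ℤ, 1 ≤ t → t ≤ T → r t = (∑ i ∈ Icc 1 k, c t i * r (t - i)) + ρ t)
    (hx0 : ∀ t ≤ T, 0 ≤ x t)
    (hx : ∀ t : ℤ, 1 ≤ t → t ≤ T → ∀ i ∈ Icc 1 k, Γ * x (t - i) + ρ t ≤ x t) :
    ∀ t ≤ T, r t ≤ x t := by
  intro t
  induction t using Int.strongRec (m := 1) with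
  | lt t ht => intro htT; rw [hr0 t (by omega)]; exact hx0 t htT
  | ge t ht ih =>
    intro htT
    obtain ⟨j, hj, hmax⟩ :=
      (Icc 1 k).exists_max_image (fun i : ℕ => x (t - i)) (nonempty_Icc.2 hk)
    calc r t = ∑ i ∈ Icc 1 k, c t i * r (t - i) + ρ t := hrec t ht htT
      _ ≤ ∑ i ∈ Icc 1 k, c t i * x (t - j) + ρ t := by
        gcongr with i hi
        · exact hc t i ht htT (mem_Icc.1 hi).1 (mem_Icc.1 hi).2
        · have hi1 := (mem_Icc.1 hi).1
          exact (ih (t - i) (by omega) (by omega)).trans (hmax i hi)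
      _ = (∑ i ∈ Icc 1 k, c t i) * x (t - j) + ρ t := by rw [sum_mul]
      _ ≤ Γ * x (t - j) + ρ t := by
        gcongr
        exacts [hx0 (t - j) (by have := (mem_Icc.1 hj).1; omega), hcsum t ht htT]
      _ ≤ x t := hx t ht htT j hj

noncomputable def geomKernelConv (Γ : ℝ) (k : ℕ) (ρ : ℤ → ℝ) (t : ℤ) : ℝ :=
  ∑ s ∈ Icc 1 t, Γ ^ ((t - s).toNat ⌈/⌉ k) * ρ s

section GeomKernelConv

variable {Γ : ℝ} {k : ℕ} {ρ : ℤ → ℝ} {t : ℤ}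

theorem geomKernelConv_nonneg (hΓ0 : 0 ≤ Γ) (hρ : ∀ s ∈ Icc 1 t, 0 ≤ ρ s) :
    0 ≤ geomKernelConv Γ k ρ t :=
  sum_nonneg fun s hs => mul_nonneg (by positivity) (hρ s hs)

theorem mul_geomKernelConv_sub_add_le (hΓ0 : 0 ≤ Γ) (hΓ1 : Γ ≤ 1) (ht : 1 ≤ t)
    (hρ : ∀ s ∈ Ico 1 t, 0 ≤ ρ s) {i : ℕ} (hi : i ∈ Icc 1 k) :
    Γ * geomKernelConv Γ k ρ (t - i) + ρ t ≤ geomKernelConv Γ k ρ t := by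
  obtain ⟨hi1, hik⟩ := mem_Icc.1 hi
  have hsplit :
      geomKernelConv Γ k ρ t = ∑ s ∈ Ico 1 t, Γ ^ ((t - s).toNat ⌈/⌉ k) * ρ s + ρ t := by
    rw [geomKernelConv, ← Ico_insert_right ht, sum_insert right_notMem_Ico, sub_self,
      Int.toNat_zero, zero_ceilDiv, pow_zero, one_mul, add_comm]
  rw [hsplit, geomKernelConv, mul_sum]
  gcongr ?_ + _
  calc ∑ s ∈ Icc 1 (t - i), Γ * (Γ ^ ((t - i - s).toNat ⌈/⌉ k) * ρ s)
      ≤ ∑ s ∈ Icc 1 (t - i), Γ ^ ((t - s).toNat ⌈/⌉ k) * ρ s := by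
        refine sum_le_sum fun s hs => ?_
        have hs' := mem_Icc.1 hs
        rw [← mul_assoc, show (t - i - s).toNat = (t - s).toNat - i by omega]
        exact mul_le_mul_of_nonneg_right (mul_pow_ceilDiv_sub_le hΓ0 hΓ1 hik _)
          (hρ s (mem_Ico.2 ⟨hs'.1, by omega⟩))
    _ ≤ ∑ s ∈ Ico 1 t, Γ ^ ((t - s).toNat ⌈/⌉ k) * ρ s :=
        sum_le_sum_of_subset_of_nonneg
          (fun s hs => by simp only [mem_Icc, mem_Ico] at hs ⊢; omega)
          fun s hs _ => mul_nonneg (by positivity) (hρ s hs)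

end GeomKernelConv

theorem external_to_policy_regret_bound_general
    (k : ℕ) (hk : 1 ≤ k) (T : ℕ)
    (Γ : ℝ) (hΓ0 : 0 ≤ Γ) (hΓ1 : Γ < 1)
    (c : ℤ → ℕ → ℝ)
    (hc : ∀ (t : ℤ) (i : ℕ), 1 ≤ t → t ≤ T → 1 ≤ i → i ≤ k → 0 ≤ c t i)
    (hcsum : ∀ t : ℤ, 1 ≤ t → t ≤ T → ∑ i ∈ Finset.Icc 1 k, c t i ≤ Γ)
    (ρ : ℤ → ℝ) (hρ : ∀ t : ℤ, 1 ≤ t → t ≤ T → 0 ≤ ρ t)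
    (r : ℤ → ℝ) (hr0 : ∀ s : ℤ, s ≤ 0 → r s = 0)
    (hrec : ∀ t : ℤ, 1 ≤ t → t ≤ T →
      r t = (∑ i ∈ Finset.Icc 1 k, c t i * r (t - i)) + ρ t) :
    ∑ t ∈ Finset.Icc (1 : ℤ) (T : ℤ), r t ≤
      (1 + Γ * k / (1 - Γ)) * ∑ t ∈ Finset.Icc (1 : ℤ) (T : ℤ), ρ t := by
  have hρIcc (t : ℤ) (htT : t ≤ T) (s : ℤ) (hs : s ∈ Icc 1 t) : 0 ≤ ρ s :=
    hρ s (mem_Icc.1 hs).1 ((mem_Icc.1 hs).2.trans htT)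
  have hr_le : ∀ t ≤ (T : ℤ), r t ≤ geomKernelConv Γ k ρ t :=
    recurrence_le_of_supersolution hk hc hcsum hr0 hrec
      (fun t htT => geomKernelConv_nonneg hΓ0 (hρIcc t htT))
      fun t ht htT _ hi => mul_geomKernelConv_sub_add_le hΓ0 hΓ1.le ht
        (fun s hs => hρIcc t htT s (Ico_subset_Icc_self hs)) hi
  calc ∑ t ∈ Icc 1 (T : ℤ), r t
      ≤ ∑ t ∈ Icc 1 (T : ℤ), geomKernelConv Γ k ρ t :=
        sum_le_sum fun t ht => hr_le t (mem_Icc.1 ht).2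
    _ ≤ _ := sum_Icc_sum_Icc_mul_le (sum_range_pow_ceilDiv_le hk hΓ0 hΓ1) (hρIcc T le_rfl)

theorem external_to_policy_regret_bound
    (k : ℕ) (hk : 1 ≤ k) (T : ℕ) (hT : 1 ≤ T)
    (Γ : ℝ) (hΓ0 : 0 ≤ Γ) (hΓ1 : Γ < 1)
    (c : ℤ → ℕ → ℝ)
    (hc : ∀ (t : ℤ) (i : ℕ), 1 ≤ t → t ≤ T → 1 ≤ i → i ≤ k → 0 ≤ c t i)
    (hcsum : ∀ t : ℤ, 1 ≤ t → t ≤ T → ∑ i ∈ Finset.Icc 1 k, c t i ≤ Γ)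
    (ρ : ℤ → ℝ) (hρ : ∀ t : ℤ, 1 ≤ t → t ≤ T → 0 ≤ ρ t)
    (r : ℤ → ℝ) (hr0 : ∀ s : ℤ, s ≤ 0 → r s = 0)
    (hrec : ∀ t : ℤ, 1 ≤ t → t ≤ T →
      r t = (∑ i ∈ Finset.Icc 1 k, c t i * r (t - i)) + ρ t) :
    ∑ t ∈ Finset.Icc (1 : ℤ) (T : ℤ), r t ≤
      (1 + Γ * k / (1 - Γ)) * ∑ t ∈ Finset.Icc (1 : ℤ) (T : ℤ), ρ t :=
  external_to_policy_regret_bound_general k hk T Γ hΓ0 hΓ1 c hc hcsum ρ hρ r hr0 hrec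
end

section
/- (Impulse response bound) Let k ≥ 1, Γ ∈ [0,1), and let coefficients c_{t,i} ≥ 0 for t ∈ ℕ, i ∈ {1,...,k} satisfy Σ_{i=1}^k c_{t,i} ≤ Γ for every t. Fix τ ≥ 1 and define the impulse response sequence (r̃_t) by r̃_t = 0 for t < τ, r̃_τ = 1, and r̃_t = Σ_{i=1}^k c_{t,i} r̃_{t-i} for t > τ. Then for every t > τ it holds that 0 ≤ r̃_t ≤ Γ^{⌈(t−τ)/k⌉}. -/
/-!
Each new value is at most `Γ` times the largest of the previous `k` values. The envelope
`Γ ^ ⌈(t - τ) / k⌉` is antitone in `t` and gains a factor `Γ` over any `k` steps, so it bounds the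
largest of `r̃_{t-k}, …, r̃_{t-1}` and then `r̃_t` itself; one induction on `t` carries
`0 ≤ r̃_t ≤ Γ ^ ⌈(t - τ) / k⌉` for all `t`, the cases `t ≤ τ` being immediate.
-/

open Finset

theorem sum_mul_le_mul_of_sum_le {ι R : Type*}
    [CommSemiring R] [PartialOrder R] [IsOrderedRing R] {s : Finset ι} {c x : ι → R} {Γ B : R}
    (hc : ∀ i ∈ s, 0 ≤ c i) (hcs : ∑ i ∈ s, c i ≤ Γ)
    (hB : 0 ≤ B) (hx : ∀ i ∈ s, x i ≤ B) :
    ∑ i ∈ s, c i * x i ≤ Γ * B :=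
  calc ∑ i ∈ s, c i * x i ≤ ∑ i ∈ s, c i * B :=
        sum_le_sum fun i hi => mul_le_mul_of_nonneg_left (hx i hi) (hc i hi)
    _ = (∑ i ∈ s, c i) * B := (sum_mul _ _ _).symm
    _ ≤ Γ * B := mul_le_mul_of_nonneg_right hcs hB

/-- For `k = 0` this is `1`, since `s / 0 = 0` in `ℚ`. -/
noncomputable def impulseEnvelope (Γ : ℝ) (k : ℕ) (s : ℤ) : ℝ :=
  Γ ^ (⌈(s : ℚ) / (k : ℚ)⌉).toNat

namespace impulseEnvelope

variable {Γ : ℝ} {k : ℕ}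

@[simp]
theorem zero : impulseEnvelope Γ k 0 = 1 := by
  simp [impulseEnvelope]

theorem nonneg (hΓ0 : 0 ≤ Γ) (s : ℤ) : 0 ≤ impulseEnvelope Γ k s :=
  pow_nonneg hΓ0 _

theorem antitone (hΓ0 : 0 ≤ Γ) (hΓ1 : Γ ≤ 1) : Antitone (impulseEnvelope Γ k) := by
  intro s s' hss'
  refine pow_le_pow_of_le_one hΓ0 hΓ1 (Int.toNat_le_toNat (Int.ceil_le_ceil ?_))
  exact div_le_div_of_nonneg_right (by exact_mod_cast hss') k.cast_nonneg

theorem mul_sub_le (hΓ0 : 0 ≤ Γ) (hΓ1 : Γ ≤ 1) (s : ℤ) :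
    Γ * impulseEnvelope Γ k (s - k) ≤ impulseEnvelope Γ k s := by
  unfold impulseEnvelope
  rw [← pow_succ']
  refine pow_le_pow_of_le_one hΓ0 hΓ1 ?_
  rcases Nat.eq_zero_or_pos k with rfl | hk
  · simp
  · have hshift : ((s - k : ℤ) : ℚ) / k = (s : ℚ) / k - 1 := by
      push_cast
      field_simp
    rw [hshift, Int.ceil_sub_one]
    omega

end impulseEnvelope

theorem impulse_response_mem_envelope {k : ℕ} {Γ : ℝ} (hΓ0 : 0 ≤ Γ) (hΓ1 : Γ ≤ 1)
    {c : ℤ → ℕ → ℝ} (hc : ∀ (t : ℤ) (i : ℕ), 1 ≤ i → i ≤ k → 0 ≤ c t i)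
    (hcsum : ∀ t : ℤ, ∑ i ∈ Icc 1 k, c t i ≤ Γ) {τ : ℤ} {rt : ℤ → ℝ}
    (h0 : ∀ t : ℤ, t < τ → rt t = 0) (h1 : rt τ = 1)
    (hrec : ∀ t : ℤ, τ < t → rt t = ∑ i ∈ Icc 1 k, c t i * rt (t - i)) (t : ℤ) :
    0 ≤ rt t ∧ rt t ≤ impulseEnvelope Γ k (t - τ) := by
  suffices h : ∀ n : ℕ, ∀ t ≤ τ + n, 0 ≤ rt t ∧ rt t ≤ impulseEnvelope Γ k (t - τ) from
    h (t - τ).toNat t (by omega)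
  intro n
  induction n with
  | zero =>
    intro t ht
    rcases (show t < τ ∨ t = τ by omega) with hlt | rfl
    · simpa [h0 t hlt] using impulseEnvelope.nonneg hΓ0 _
    · simp [h1]
  | succ n ih =>
    intro t ht
    rcases le_or_gt t (τ + n) with hle | hgt
    · exact ih t hle
    have hc' : ∀ i ∈ Icc 1 k, 0 ≤ c t i := fun i hi =>
      hc t i (mem_Icc.1 hi).1 (mem_Icc.1 hi).2
    have hprev : ∀ i ∈ Icc 1 k, 0 ≤ rt (t - i) ∧
        rt (t - i) ≤ impulseEnvelope Γ k (t - τ - k) := by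
      intro i hi
      obtain ⟨hi1, hik⟩ := mem_Icc.1 hi
      obtain ⟨hnonneg, hle⟩ := ih (t - i) (by omega)
      exact ⟨hnonneg, hle.trans (impulseEnvelope.antitone hΓ0 hΓ1 (by omega))⟩
    rw [hrec t (by omega)]
    refine ⟨sum_nonneg fun i hi => mul_nonneg (hc' i hi) (hprev i hi).1, ?_⟩
    calc ∑ i ∈ Icc 1 k, c t i * rt (t - i) ≤ Γ * impulseEnvelope Γ k (t - τ - k) :=
          sum_mul_le_mul_of_sum_le hc' (hcsum t) (impulseEnvelope.nonneg hΓ0 _)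
            fun i hi => (hprev i hi).2
      _ ≤ impulseEnvelope Γ k (t - τ) := impulseEnvelope.mul_sub_le hΓ0 hΓ1 _

theorem impulse_response_bound_general
    (k : ℕ)
    (Γ : ℝ) (hΓ0 : 0 ≤ Γ) (hΓ1 : Γ < 1)
    (c : ℤ → ℕ → ℝ)
    (hc : ∀ (t : ℤ) (i : ℕ), 1 ≤ i → i ≤ k → 0 ≤ c t i)
    (hcsum : ∀ t : ℤ, ∑ i ∈ Finset.Icc 1 k, c t i ≤ Γ)
    (τ : ℤ)
    (rt : ℤ → ℝ)
    (h0 : ∀ t : ℤ, t < τ → rt t = 0)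
    (h1 : rt τ = 1)
    (hrec : ∀ t : ℤ, τ < t → rt t = ∑ i ∈ Finset.Icc 1 k, c t i * rt (t - i)) :
    ∀ t : ℤ, τ < t →
      0 ≤ rt t ∧ rt t ≤ Γ ^ (⌈((t - τ : ℤ) : ℚ) / (k : ℚ)⌉).toNat :=
  fun t _ => impulse_response_mem_envelope hΓ0 hΓ1.le hc hcsum h0 h1 hrec t

theorem impulse_response_bound
    (k : ℕ) (hk : 1 ≤ k)
    (Γ : ℝ) (hΓ0 : 0 ≤ Γ) (hΓ1 : Γ < 1)
    (c : ℤ → ℕ → ℝ)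
    (hc : ∀ (t : ℤ) (i : ℕ), 1 ≤ i → i ≤ k → 0 ≤ c t i)
    (hcsum : ∀ t : ℤ, ∑ i ∈ Finset.Icc 1 k, c t i ≤ Γ)
    (τ : ℤ) (hτ : 1 ≤ τ)
    (rt : ℤ → ℝ)
    (h0 : ∀ t : ℤ, t < τ → rt t = 0)
    (h1 : rt τ = 1)
    (hrec : ∀ t : ℤ, τ < t → rt t = ∑ i ∈ Finset.Icc 1 k, c t i * rt (t - i)) :
    ∀ t : ℤ, τ < t →
      0 ≤ rt t ∧ rt t ≤ Γ ^ (⌈((t - τ : ℤ) : ℚ) / (k : ℚ)⌉).toNat :=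
  impulse_response_bound_general k Γ hΓ0 hΓ1 c hc hcsum τ rt h0 h1 hrec
end

section
/- (Elliptic Potential Lemma) Let V_0 ∈ ℝ^{d×d} be positive definite and let a_1, ..., a_n ∈ ℝ^d be vectors with ‖a_t‖₂ ≤ L < ∞ for all t ∈ {1,...,n}. Define V_t = V_0 + Σ_{s=1}^t a_s a_s^T. Then Σ_{t=1}^n min{1, ‖a_t‖²_{V_{t-1}^{-1}}} ≤ 2d · log( (tr(V_0) + nL²) / (d · det(V_0)^{1/d}) ), where ‖v‖²_M = v^T M v. -/
/-!
Since `V_{t+1} = V_t + a_t a_tᵀ`, the matrix determinant lemma gives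
`det V_{t+1} = det V_t · (1 + ‖a_t‖²_{V_t⁻¹})`, so the sum of `log (1 + ‖a_t‖²_{V_t⁻¹})`
telescopes to `log det V_n - log det V_0`. Each capped term is at most twice that logarithm, and
AM-GM on the eigenvalues of `V_n` bounds `det V_n` by `(tr V_n / d)^d ≤ ((tr V_0 + nL²) / d)^d`.
-/

open Matrix Finset

lemma min_one_le_two_mul_log_one_add {x : ℝ} (hx : 0 ≤ x) :
    min 1 x ≤ 2 * Real.log (1 + x) := by
  have key : min 1 x ≤ 2 * (2 * x / (x + 2)) := by
    rw [mul_div_assoc', le_div_iff₀ (by positivity)]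
    rcases le_total x 1 with h | h
    · rw [min_eq_right h]; nlinarith
    · rw [min_eq_left h]; linarith
  linarith [Real.le_log_one_add_of_nonneg hx]

lemma Real.prod_le_sum_div_card_pow {ι : Type*} (s : Finset ι) (z : ι → ℝ)
    (hz : ∀ i ∈ s, 0 ≤ z i) : ∏ i ∈ s, z i ≤ ((∑ i ∈ s, z i) / #s) ^ #s := by
  rcases s.eq_empty_or_nonempty with rfl | hs
  · simp
  have hcard : (0 : ℝ) < #s := by exact_mod_cast hs.card_pos
  have hgm := Real.geom_mean_le_arith_mean_weighted s (fun _ => 1 / (#s : ℝ)) z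
    (fun _ _ => by positivity) (by simp [hcard.ne']) hz
  calc ∏ i ∈ s, z i = (∏ i ∈ s, z i ^ (1 / (#s : ℝ))) ^ #s := by
        rw [← Finset.prod_pow]
        refine Finset.prod_congr rfl fun i hi => ?_
        rw [← Real.rpow_mul_natCast (hz i hi), one_div_mul_cancel hcard.ne', Real.rpow_one]
    _ ≤ (∑ i ∈ s, 1 / (#s : ℝ) * z i) ^ #s :=
        pow_le_pow_left₀ (Finset.prod_nonneg fun i hi => Real.rpow_nonneg (hz i hi) _) hgm _
    _ = ((∑ i ∈ s, z i) / #s) ^ #s := by rw [← Finset.mul_sum, one_div_mul_eq_div]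

namespace Matrix

variable {m : Type*} [Fintype m] [DecidableEq m]

theorem det_add_vecMulVec {R : Type*} [CommRing R] {A : Matrix m m R} (hA : IsUnit A.det)
    (u v : m → R) : (A + vecMulVec u v).det = A.det * (1 + v ⬝ᵥ (A⁻¹ *ᵥ u)) := by
  rw [vecMulVec_eq Unit, det_add_replicateCol_mul_replicateRow hA,
    det_unique (1 + replicateRow Unit v * A⁻¹ * replicateCol Unit u), Matrix.mul_assoc,
    ← replicateCol_mulVec]
  simp [replicateRow_mul_replicateCol_apply]

theorem PosSemidef.det_le_trace_div_card_pow {A : Matrix m m ℝ} (hA : A.PosSemidef) :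
    A.det ≤ (A.trace / Fintype.card m) ^ Fintype.card m := by
  rw [hA.isHermitian.det_eq_prod_eigenvalues, hA.isHermitian.trace_eq_sum_eigenvalues]
  simpa using Real.prod_le_sum_div_card_pow univ _ fun i _ => hA.eigenvalues_nonneg i

theorem PosDef.dotProduct_inv_mulVec_nonneg {A : Matrix m m ℝ} (hA : A.PosDef) (v : m → ℝ) :
    0 ≤ v ⬝ᵥ (A⁻¹ *ᵥ v) := by
  simpa using hA.inv.posSemidef.dotProduct_mulVec_nonneg v

theorem PosDef.log_det_le {A : Matrix m m ℝ} (hA : A.PosDef) :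
    Real.log A.det ≤ Fintype.card m * Real.log (A.trace / Fintype.card m) := by
  rw [← Real.log_pow]
  exact Real.log_le_log hA.det_pos hA.posSemidef.det_le_trace_div_card_pow

end Matrix

def designMatrix {m : Type*} [Fintype m] {n : ℕ} (V₀ : Matrix m m ℝ) (a : Fin n → m → ℝ)
    (k : ℕ) : Matrix m m ℝ :=
  V₀ + ∑ s ∈ univ.filter (fun s : Fin n => (s : ℕ) < k), vecMulVec (a s) (a s)

namespace designMatrix

variable {m : Type*} [Fintype m] {n : ℕ} {V₀ : Matrix m m ℝ} {a : Fin n → m → ℝ}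

@[simp]
theorem zero : designMatrix V₀ a 0 = V₀ := by
  simp [designMatrix]

theorem succ (t : Fin n) :
    designMatrix V₀ a (t + 1) = designMatrix V₀ a t + vecMulVec (a t) (a t) := by
  have hfilter : univ.filter (fun s : Fin n => (s : ℕ) < t + 1) =
      insert t (univ.filter (fun s : Fin n => (s : ℕ) < t)) := by
    ext s
    simp [le_iff_eq_or_lt, Fin.val_eq_val]
  rw [designMatrix, designMatrix, hfilter, sum_insert (by simp), add_comm (vecMulVec _ _),
    add_assoc]

theorem posDef (hV₀ : V₀.PosDef) (k : ℕ) : (designMatrix V₀ a k).PosDef :=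
  hV₀.add_posSemidef <| posSemidef_sum _ fun s _ => by
    simpa using posSemidef_vecMulVec_self_star (a s)

theorem trace_le {c : ℝ} (hc : ∀ t, a t ⬝ᵥ a t ≤ c) :
    (designMatrix V₀ a n).trace ≤ V₀.trace + n * c := by
  have hall : univ.filter (fun s : Fin n => (s : ℕ) < n) = univ :=
    filter_true_of_mem fun s _ => s.isLt
  rw [designMatrix, hall, trace_add, trace_sum]
  simpa using sum_le_card_nsmul univ _ c fun t _ => (trace_vecMulVec (a t) (a t)).trans_le (hc t)

theorem log_one_add_inv_quadForm [DecidableEq m] (hV₀ : V₀.PosDef) (t : Fin n) :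
    Real.log (1 + a t ⬝ᵥ ((designMatrix V₀ a t)⁻¹ *ᵥ a t)) =
      Real.log (designMatrix V₀ a (t + 1)).det - Real.log (designMatrix V₀ a t).det := by
  have hpos := posDef hV₀ (a := a) t
  rw [succ, det_add_vecMulVec hpos.det_pos.ne'.isUnit, Real.log_mul hpos.det_pos.ne',
    add_sub_cancel_left]
  exact (add_pos_of_pos_of_nonneg one_pos (hpos.dotProduct_inv_mulVec_nonneg (a t))).ne'

theorem sum_log_one_add_inv_quadForm [DecidableEq m] (hV₀ : V₀.PosDef) :
    ∑ t : Fin n, Real.log (1 + a t ⬝ᵥ ((designMatrix V₀ a t)⁻¹ *ᵥ a t)) =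
      Real.log (designMatrix V₀ a n).det - Real.log V₀.det := by
  simp_rw [log_one_add_inv_quadForm hV₀]
  rw [Fin.sum_univ_eq_sum_range (fun k => Real.log (designMatrix V₀ a (k + 1)).det -
    Real.log (designMatrix V₀ a k).det),
    sum_range_sub (fun k => Real.log (designMatrix V₀ a k).det), zero]

end designMatrix

lemma mul_log_div_sub_log_eq {T D d : ℝ} (hT : 0 < T) (hD : 0 < D) (hd : 0 < d) :
    d * Real.log (T / d) - Real.log D = d * Real.log (T / (d * D ^ (1 / d))) := by
  rw [Real.log_div hT.ne' hd.ne', Real.log_div hT.ne' (by positivity),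
    Real.log_mul hd.ne' (by positivity), Real.log_rpow hD]
  field_simp
  ring

theorem elliptic_potential_lemma_general
    (d n : ℕ) (hd : 1 ≤ d)
    (V0 : Matrix (Fin d) (Fin d) ℝ) (hV0 : V0.PosDef)
    (L : ℝ)
    (a : Fin n → Fin d → ℝ)
    (ha : ∀ t : Fin n, Real.sqrt (∑ i, (a t i) ^ 2) ≤ L)
    (V : ℕ → Matrix (Fin d) (Fin d) ℝ)
    (hV : ∀ t : ℕ, V t = V0 +
      ∑ s ∈ Finset.univ.filter (fun s : Fin n => (s : ℕ) < t),
        Matrix.vecMulVec (a s) (a s)) :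
    ∑ t : Fin n, min 1 (a t ⬝ᵥ ((V t)⁻¹ *ᵥ a t)) ≤
      2 * d * Real.log ((V0.trace + n * L ^ 2) / (d * V0.det ^ ((1 : ℝ) / d))) := by
  obtain rfl : V = designMatrix V0 a := funext hV
  have hd₀ : (0 : ℝ) < d := by exact_mod_cast hd
  have : Nonempty (Fin d) := ⟨⟨0, hd⟩⟩
  have hnorm (t : Fin n) : a t ⬝ᵥ a t ≤ L ^ 2 := by
    simpa [dotProduct, sq] using (Real.sqrt_le_iff.mp (ha t)).2
  have hVn := designMatrix.posDef hV0 (a := a) n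
  have hlogdet :
      Real.log (designMatrix V0 a n).det ≤ d * Real.log ((V0.trace + n * L ^ 2) / d) :=
    calc _ ≤ d * Real.log ((designMatrix V0 a n).trace / d) := by simpa using hVn.log_det_le
      _ ≤ d * Real.log ((V0.trace + n * L ^ 2) / d) := by
        gcongr
        · exact div_pos hVn.trace_pos hd₀
        · exact designMatrix.trace_le hnorm
  calc ∑ t : Fin n, min 1 (a t ⬝ᵥ ((designMatrix V0 a t)⁻¹ *ᵥ a t))
      ≤ ∑ t : Fin n, 2 * Real.log (1 + a t ⬝ᵥ ((designMatrix V0 a t)⁻¹ *ᵥ a t)) :=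
        sum_le_sum fun t _ => min_one_le_two_mul_log_one_add
          ((designMatrix.posDef hV0 t).dotProduct_inv_mulVec_nonneg _)
    _ = 2 * (Real.log (designMatrix V0 a n).det - Real.log V0.det) := by
        rw [← mul_sum, designMatrix.sum_log_one_add_inv_quadForm hV0]
    _ ≤ 2 * (d * Real.log ((V0.trace + n * L ^ 2) / d) - Real.log V0.det) := by gcongr
    _ = 2 * d * Real.log ((V0.trace + n * L ^ 2) / (d * V0.det ^ ((1 : ℝ) / d))) := by
        rw [mul_log_div_sub_log_eq (by positivity [hV0.trace_pos]) hV0.det_pos hd₀, mul_assoc]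

theorem elliptic_potential_lemma
    (d n : ℕ) (hd : 1 ≤ d)
    (V0 : Matrix (Fin d) (Fin d) ℝ) (hV0 : V0.PosDef)
    (L : ℝ) (hL : 0 < L)
    (a : Fin n → Fin d → ℝ)
    (ha : ∀ t : Fin n, Real.sqrt (∑ i, (a t i) ^ 2) ≤ L)
    (V : ℕ → Matrix (Fin d) (Fin d) ℝ)
    (hV : ∀ t : ℕ, V t = V0 +
      ∑ s ∈ Finset.univ.filter (fun s : Fin n => (s : ℕ) < t),
        Matrix.vecMulVec (a s) (a s)) :
    ∑ t : Fin n, min 1 (a t ⬝ᵥ ((V t)⁻¹ *ᵥ a t)) ≤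
      2 * d * Real.log ((V0.trace + n * L ^ 2) / (d * V0.det ^ ((1 : ℝ) / d))) :=
  elliptic_potential_lemma_general d n hd V0 hV0 L a ha V hV
end

section
/- (No policy exceeds the best steady state, noiseless case) Let k ≥ 1 and let A be a finite action set with parameter vectors γ(a) = (γ_0(a),...,γ_k(a)) satisfying γ_i(a) ≥ 0 for all i ∈ {0,...,k} and Σ_{i=1}^k γ_i(a) < 1 for every a. Define x* = max_{a ∈ A} γ_0(a)/(1 − Σ_{i=1}^k γ_i(a)). Let (a_t)_{t≥1} be any action sequence and define x_t = γ_0(a_t) + Σ_{i=1}^k γ_i(a_t) x_{t-i}, where the initial values satisfy x_s ≤ x* for all s ≤ 0. Then x_t ≤ x* for every t ≥ 1. -/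
/-!
The bound `x*` is an invariant: if every lag `x_{t-i}` is at most `x*`, then
`x_t ≤ γ₀ + (∑ γᵢ) x* ≤ x*`, because `γ₀ ≤ (1 - ∑ γᵢ) x*` says exactly that the
steady state of `a_t` is at most `x*`. Strong induction on `t` finishes.
-/

open Finset

theorem add_sum_mul_le_of_div_one_sub_sum_le {ι : Type*} {s : Finset ι} {w y : ι → ℝ}
    {c M : ℝ} (hw : ∀ i ∈ s, 0 ≤ w i) (hsum : ∑ i ∈ s, w i < 1)
    (hc : c / (1 - ∑ i ∈ s, w i) ≤ M) (hy : ∀ i ∈ s, y i ≤ M) :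
    c + ∑ i ∈ s, w i * y i ≤ M := by
  have hc' : c ≤ M * (1 - ∑ i ∈ s, w i) := (div_le_iff₀ (sub_pos.2 hsum)).1 hc
  calc c + ∑ i ∈ s, w i * y i ≤ c + ∑ i ∈ s, w i * M := by
        gcongr with i hi
        · exact hw i hi
        · exact hy i hi
    _ = c + (∑ i ∈ s, w i) * M := by rw [sum_mul]
    _ ≤ M := by linarith

theorem no_policy_exceeds_best_steady_state_general
    (n k : ℕ)
    (γ : Fin n → ℕ → ℝ)
    (hγ : ∀ (a : Fin n) (i : ℕ), i ≤ k → 0 ≤ γ a i)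
    (hstab : ∀ a : Fin n, ∑ i ∈ Finset.Icc 1 k, γ a i < 1)
    (xstar : ℝ)
    (hmax : ∀ a : Fin n, γ a 0 / (1 - ∑ i ∈ Finset.Icc 1 k, γ a i) ≤ xstar)
    (a : ℤ → Fin n) (x : ℤ → ℝ)
    (hinit : ∀ s : ℤ, s ≤ 0 → x s ≤ xstar)
    (hrec : ∀ t : ℤ, 1 ≤ t →
      x t = γ (a t) 0 + ∑ i ∈ Finset.Icc 1 k, γ (a t) i * x (t - i)) :
    ∀ t : ℤ, 1 ≤ t → x t ≤ xstar := by
  suffices ∀ t, x t ≤ xstar from fun t _ => this t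
  intro t
  induction t using Int.strongRec (m := 1) with
  | lt s hs => exact hinit s (by omega)
  | ge t ht ih =>
    rw [hrec t ht]
    refine add_sum_mul_le_of_div_one_sub_sum_le (fun i hi => hγ _ i (mem_Icc.1 hi).2)
      (hstab _) (hmax _) fun i hi => ih _ ?_
    have := (mem_Icc.1 hi).1
    omega

theorem no_policy_exceeds_best_steady_state
    (n k : ℕ) (hn : 1 ≤ n) (hk : 1 ≤ k)
    (γ : Fin n → ℕ → ℝ)
    (hγ : ∀ (a : Fin n) (i : ℕ), i ≤ k → 0 ≤ γ a i)
    (hstab : ∀ a : Fin n, ∑ i ∈ Finset.Icc 1 k, γ a i < 1)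
    (xstar : ℝ)
    (hmax : ∀ a : Fin n, γ a 0 / (1 - ∑ i ∈ Finset.Icc 1 k, γ a i) ≤ xstar)
    (hattain : ∃ a : Fin n, xstar = γ a 0 / (1 - ∑ i ∈ Finset.Icc 1 k, γ a i))
    (a : ℤ → Fin n) (x : ℤ → ℝ)
    (hinit : ∀ s : ℤ, s ≤ 0 → x s ≤ xstar)
    (hrec : ∀ t : ℤ, 1 ≤ t →
      x t = γ (a t) 0 + ∑ i ∈ Finset.Icc 1 k, γ (a t) i * x (t - i)) :
    ∀ t : ℤ, 1 ≤ t → x t ≤ xstar :=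
  no_policy_exceeds_best_steady_state_general n k γ hγ hstab xstar hmax a x hinit hrec
end

section
/- (Lower bound on the noiseless trajectory of a constant action) Let k ≥ 1, γ_0 ≥ 0, and γ_1, ..., γ_k ≥ 0 with Γ := Σ_{i=1}^k γ_i < 1. Define x_t = γ_0 + Σ_{i=1}^k γ_i x_{t-i} with x_s = 0 for s ≤ 0. Then for every t ≥ 1, x_t ≥ γ_0 (1 − Γ^{⌈t/k⌉}) / (1 − Γ). -/
/-!
Put `L n := γ₀ ∑_{j<n} Γ^j`, so that `L 0 = 0` and `L (n+1) = γ₀ + Γ L n`. The trajectory is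
nonnegative, and by induction on `n`, `x t ≥ L n` as soon as `t > (n - 1) k`: for such `t` every
predecessor `t - i` with `1 ≤ i ≤ k` satisfies `t - i > (n - 2) k`, and the recursion turns the
bounds `x (t - i) ≥ L (n - 1)` into `x t ≥ γ₀ + Γ L (n - 1)`. The smallest admissible `n` for a
given `t` is `⌈t / k⌉`.
-/

open Finset

theorem ar_trajectory_nonneg {k : ℕ} {γ0 : ℝ} {γ : ℕ → ℝ} {x : ℤ → ℝ} (hγ0 : 0 ≤ γ0)
    (hγ : ∀ i : ℕ, 1 ≤ i → i ≤ k → 0 ≤ γ i) (hx0 : ∀ s : ℤ, s ≤ 0 → x s = 0)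
    (hrec : ∀ t : ℤ, 1 ≤ t → x t = γ0 + ∑ i ∈ Icc 1 k, γ i * x (t - i)) (t : ℤ) :
    0 ≤ x t := by
  suffices h : ∀ n : ℕ, ∀ t : ℤ, t ≤ n → 0 ≤ x t from h t.toNat t (Int.self_le_toNat t)
  intro n
  induction n with
  | zero => exact fun t ht => (hx0 t ht).ge
  | succ n ih =>
    intro t ht
    rcases lt_or_eq_of_le ht with ht | rfl
    · exact ih t (by omega)
    · rw [hrec _ (by omega)]
      refine add_nonneg hγ0 (sum_nonneg fun i hi => ?_)
      obtain ⟨hi1, hik⟩ := mem_Icc.mp hi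
      exact mul_nonneg (hγ i hi1 hik) (ih _ (by omega))

theorem geom_sum_le_ar_trajectory {k : ℕ} {γ0 : ℝ} {γ : ℕ → ℝ} {x : ℤ → ℝ} (hγ0 : 0 ≤ γ0)
    (hγ : ∀ i : ℕ, 1 ≤ i → i ≤ k → 0 ≤ γ i) (hx0 : ∀ s : ℤ, s ≤ 0 → x s = 0)
    (hrec : ∀ t : ℤ, 1 ≤ t → x t = γ0 + ∑ i ∈ Icc 1 k, γ i * x (t - i))
    (n : ℕ) (t : ℤ) (hnt : (n : ℤ) * k < t + k) :
    γ0 * ∑ j ∈ range n, (∑ i ∈ Icc 1 k, γ i) ^ j ≤ x t := by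
  induction n generalizing t with
  | zero => simpa using ar_trajectory_nonneg hγ0 hγ hx0 hrec t
  | succ n ih =>
    set Γ := ∑ i ∈ Icc 1 k, γ i
    set L := γ0 * ∑ j ∈ range n, Γ ^ j
    have hlt : (n : ℤ) * k < t := by push_cast at hnt; linarith
    have hpred : ∀ i ∈ Icc 1 k, γ i * L ≤ γ i * x (t - i) := by
      intro i hi
      obtain ⟨hi1, hik⟩ := mem_Icc.mp hi
      exact mul_le_mul_of_nonneg_left (ih _ (by omega)) (hγ i hi1 hik)
    have hstep : γ0 * ∑ j ∈ range (n + 1), Γ ^ j = γ0 + ∑ i ∈ Icc 1 k, γ i * L := by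
      rw [geom_sum_succ, ← sum_mul]
      ring
    rw [hstep, hrec t (by nlinarith)]
    exact add_le_add_right (sum_le_sum hpred) γ0

theorem toNat_ceil_div_mul_lt_add {k : ℕ} {t : ℤ} (ht : 0 < t) :
    ((⌈(t : ℚ) / k⌉).toNat : ℤ) * k < t + k := by
  rcases k.eq_zero_or_pos with rfl | hk
  · simpa using ht
  have hceil : (⌈(t : ℚ) / k⌉ : ℚ) * k < t + k := by
    have := Int.ceil_lt_add_one ((t : ℚ) / k)
    rwa [← lt_div_iff₀ (by exact_mod_cast hk), add_div, div_self (by positivity)]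
  rw [Int.toNat_eq_max]
  rcases max_cases ⌈(t : ℚ) / k⌉ 0 with ⟨hmax, -⟩ | ⟨hmax, -⟩ <;> rw [hmax]
  · exact_mod_cast hceil
  · omega

theorem constant_action_trajectory_lower_bound_general
    (k : ℕ)
    (γ0 : ℝ) (hγ0 : 0 ≤ γ0)
    (γ : ℕ → ℝ) (hγ : ∀ i : ℕ, 1 ≤ i → i ≤ k → 0 ≤ γ i)
    (Γ : ℝ) (hΓdef : Γ = ∑ i ∈ Finset.Icc 1 k, γ i) (hΓ : Γ < 1)
    (x : ℤ → ℝ) (hx0 : ∀ s : ℤ, s ≤ 0 → x s = 0)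
    (hrec : ∀ t : ℤ, 1 ≤ t →
      x t = γ0 + ∑ i ∈ Finset.Icc 1 k, γ i * x (t - i)) :
    ∀ t : ℤ, 1 ≤ t →
      γ0 * (1 - Γ ^ (⌈((t : ℚ)) / (k : ℚ)⌉).toNat) / (1 - Γ) ≤ x t := by
  intro t ht
  rw [mul_div_assoc, ← neg_sub, ← neg_sub Γ, neg_div_neg_eq, ← geom_sum_eq hΓ.ne, hΓdef]
  exact geom_sum_le_ar_trajectory hγ0 hγ hx0 hrec _ t (toNat_ceil_div_mul_lt_add ht)

theorem constant_action_trajectory_lower_bound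
    (k : ℕ) (hk : 1 ≤ k)
    (γ0 : ℝ) (hγ0 : 0 ≤ γ0)
    (γ : ℕ → ℝ) (hγ : ∀ i : ℕ, 1 ≤ i → i ≤ k → 0 ≤ γ i)
    (Γ : ℝ) (hΓdef : Γ = ∑ i ∈ Finset.Icc 1 k, γ i) (hΓ : Γ < 1)
    (x : ℤ → ℝ) (hx0 : ∀ s : ℤ, s ≤ 0 → x s = 0)
    (hrec : ∀ t : ℤ, 1 ≤ t →
      x t = γ0 + ∑ i ∈ Finset.Icc 1 k, γ i * x (t - i)) :
    ∀ t : ℤ, 1 ≤ t →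
      γ0 * (1 - Γ ^ (⌈((t : ℚ)) / (k : ℚ)⌉).toNat) / (1 - Γ) ≤ x t :=
  constant_action_trajectory_lower_bound_general k γ0 hγ0 γ hγ Γ hΓdef hΓ x hx0 hrec
end

section
/- (Cumulative regret of the best constant action, noiseless case) Let k ≥ 1, γ_0 ≥ 0, and γ_1, ..., γ_k ≥ 0 with Γ := Σ_{i=1}^k γ_i < 1. Define x_t = γ_0 + Σ_{i=1}^k γ_i x_{t-i} with x_s = 0 for s ≤ 0, and let x* = γ_0/(1 − Γ) be the steady-state reward. Then 0 ≤ x* − x_t ≤ γ_0 Γ^{⌈t/k⌉}/(1 − Γ) for every t ≥ 1, and the series Σ_{t=1}^∞ (x* − x_t) converges with Σ_{t=1}^∞ (x* − x_t) ≤ γ_0 k / (1 − Γ)². -/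
/-!
The deficit `d t = x* − x t` satisfies the homogeneous recursion `d t = ∑ γ_i d (t − i)`, with
`d = x*` before time `1`. Since the coefficients are nonnegative, this recursion obeys a comparison
principle. Going back at most `k` steps lowers the block index `⌈t/k⌉` by at most one, so
`x* Γ^{⌈t/k⌉}` is a supersolution, and `0` is a subsolution. For the series, summing the recursion
over `t ≤ n` bounds each shifted partial sum by `k x*` plus the partial sum `S_n` itself, whence
`S_n ≤ Γ (k x* + S_n)`.
-/

open Finset

def blockIndex (k : ℕ) (t : ℤ) : ℕ := (⌈(t : ℚ) / k⌉).toNat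

lemma blockIndex_of_nonpos (k : ℕ) {t : ℤ} (ht : t ≤ 0) : blockIndex k t = 0 := by
  have : ⌈(t : ℚ) / k⌉ ≤ 0 := Int.ceil_le.mpr <| by
    push_cast
    exact div_nonpos_of_nonpos_of_nonneg (by exact_mod_cast ht) k.cast_nonneg
  simp [blockIndex, this]

lemma one_le_blockIndex {k : ℕ} (hk : 0 < k) {t : ℤ} (ht : 1 ≤ t) : 1 ≤ blockIndex k t := by
  have : 0 < ⌈(t : ℚ) / k⌉ := Int.ceil_pos.mpr (by positivity)
  unfold blockIndex
  omega

lemma blockIndex_le_blockIndex_sub_add_one {k i : ℕ} (hik : i ≤ k) (t : ℤ) :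
    blockIndex k t ≤ blockIndex k (t - i) + 1 := by
  have hdiv : (t : ℚ) / k - 1 ≤ ((t - i : ℤ) : ℚ) / k := by
    rcases k.eq_zero_or_pos with rfl | hk
    · simp
    · have : (i : ℚ) / k ≤ 1 := (div_le_one (by positivity)).mpr (by exact_mod_cast hik)
      push_cast
      rw [sub_div]
      linarith
  have := Int.ceil_mono hdiv
  rw [Int.ceil_sub_one] at this
  unfold blockIndex
  omega

section Recurrence

variable {k : ℕ} {γ : ℕ → ℝ}

theorem le_of_recurrence_comparison (hγ : ∀ i ∈ Icc 1 k, 0 ≤ γ i) {u v : ℤ → ℝ}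
    (hu : ∀ t : ℤ, 1 ≤ t → u t ≤ ∑ i ∈ Icc 1 k, γ i * u (t - i))
    (hv : ∀ t : ℤ, 1 ≤ t → ∑ i ∈ Icc 1 k, γ i * v (t - i) ≤ v t)
    (hinit : ∀ s : ℤ, s ≤ 0 → u s ≤ v s) (t : ℤ) : u t ≤ v t := by
  suffices ∀ n : ℕ, ∀ t : ℤ, t ≤ n → u t ≤ v t from this t.toNat t (Int.self_le_toNat t)
  intro n
  induction n with
  | zero => exact fun t ht => hinit t (by exact_mod_cast ht)
  | succ n ih =>
    intro t ht
    rcases le_or_gt t 0 with ht0 | ht0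
    · exact hinit t ht0
    calc u t ≤ ∑ i ∈ Icc 1 k, γ i * u (t - i) := hu t ht0
      _ ≤ ∑ i ∈ Icc 1 k, γ i * v (t - i) := by
        refine sum_le_sum fun i hi => mul_le_mul_of_nonneg_left (ih _ ?_) (hγ i hi)
        have := (mem_Icc.mp hi).1
        push_cast at ht
        omega
      _ ≤ v t := hv t ht0

theorem geometric_blockIndex_supersolution (hk : 0 < k) (hγ : ∀ i ∈ Icc 1 k, 0 ≤ γ i)
    {Γ : ℝ} (hΓdef : Γ = ∑ i ∈ Icc 1 k, γ i) (hΓ : Γ ≤ 1) {C : ℝ} (hC : 0 ≤ C)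
    {t : ℤ} (ht : 1 ≤ t) :
    ∑ i ∈ Icc 1 k, γ i * (C * Γ ^ blockIndex k (t - i)) ≤ C * Γ ^ blockIndex k t := by
  have hΓ0 : 0 ≤ Γ := hΓdef ▸ sum_nonneg hγ
  have hN := one_le_blockIndex hk ht
  calc ∑ i ∈ Icc 1 k, γ i * (C * Γ ^ blockIndex k (t - i))
      ≤ ∑ i ∈ Icc 1 k, γ i * (C * Γ ^ (blockIndex k t - 1)) := by
        refine sum_le_sum fun i hi => mul_le_mul_of_nonneg_left ?_ (hγ i hi)
        have := blockIndex_le_blockIndex_sub_add_one (mem_Icc.mp hi).2 t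
        exact mul_le_mul_of_nonneg_left (pow_le_pow_of_le_one hΓ0 hΓ (by omega)) hC
    _ = C * (Γ * Γ ^ (blockIndex k t - 1)) := by rw [← sum_mul, ← hΓdef]; ring
    _ = C * Γ ^ blockIndex k t := by rw [← pow_succ', Nat.sub_add_cancel hN]

lemma sum_range_shift_le {d : ℤ → ℝ} (hd : ∀ t, 0 ≤ d t) {C : ℝ}
    (hC : ∀ s : ℤ, s ≤ 0 → d s ≤ C) (n i : ℕ) :
    ∑ t ∈ range n, d (t + 1 - i) ≤ i * C + ∑ t ∈ range n, d (t + 1) := by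
  induction i with
  | zero => simp
  | succ i ih =>
    have hdi := hC (-i) (by omega)
    calc ∑ t ∈ range n, d (t + 1 - (i + 1 : ℕ))
        ≤ ∑ t ∈ range (n + 1), d (t - i) := by
          push_cast
          simp_rw [add_sub_add_right_eq_sub]
          exact sum_le_sum_of_subset_of_nonneg (range_subset_range.mpr n.le_succ)
            fun _ _ _ => hd _
      _ = ∑ t ∈ range n, d (t + 1 - i) + d (-i) := by
          rw [sum_range_succ']
          push_cast
          simp only [add_sub_right_comm, zero_sub]
      _ ≤ (i + 1 : ℕ) * C + ∑ t ∈ range n, d (t + 1) := by push_cast; linarith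

theorem sum_range_le_of_recurrence (hγ : ∀ i ∈ Icc 1 k, 0 ≤ γ i)
    {Γ : ℝ} (hΓdef : Γ = ∑ i ∈ Icc 1 k, γ i) (hΓ : Γ < 1)
    {d : ℤ → ℝ} (hd : ∀ t, 0 ≤ d t) {C : ℝ} (hC : ∀ s : ℤ, s ≤ 0 → d s ≤ C)
    (hrec : ∀ t : ℤ, 1 ≤ t → d t ≤ ∑ i ∈ Icc 1 k, γ i * d (t - i)) (n : ℕ) :
    ∑ t ∈ range n, d (t + 1) ≤ k * C / (1 - Γ) := by
  set S := ∑ t ∈ range n, d (t + 1)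
  have hC0 : 0 ≤ C := (hd 0).trans (hC 0 le_rfl)
  have hS : S ≤ Γ * (k * C + S) :=
    calc S ≤ ∑ t ∈ range n, ∑ i ∈ Icc 1 k, γ i * d (t + 1 - i) :=
          sum_le_sum fun t _ => hrec _ (by omega)
      _ = ∑ i ∈ Icc 1 k, γ i * ∑ t ∈ range n, d (t + 1 - i) := by
          rw [sum_comm]; simp only [mul_sum]
      _ ≤ ∑ i ∈ Icc 1 k, γ i * (k * C + S) := by
          refine sum_le_sum fun i hi => mul_le_mul_of_nonneg_left ?_ (hγ i hi)
          have : (i : ℝ) * C ≤ k * C :=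
            mul_le_mul_of_nonneg_right (by exact_mod_cast (mem_Icc.mp hi).2) hC0
          linarith [sum_range_shift_le hd hC n i]
      _ = Γ * (k * C + S) := by rw [← sum_mul, ← hΓdef]
  have hΓ0 : 0 ≤ Γ := hΓdef ▸ sum_nonneg hγ
  rw [le_div_iff₀ (by linarith)]
  nlinarith [mul_nonneg (Nat.cast_nonneg k : (0 : ℝ) ≤ k) hC0]

end Recurrence

theorem constant_action_cumulative_regret
    (k : ℕ) (hk : 1 ≤ k)
    (γ0 : ℝ) (hγ0 : 0 ≤ γ0)
    (γ : ℕ → ℝ) (hγ : ∀ i : ℕ, 1 ≤ i → i ≤ k → 0 ≤ γ i)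
    (Γ : ℝ) (hΓdef : Γ = ∑ i ∈ Finset.Icc 1 k, γ i) (hΓ : Γ < 1)
    (x : ℤ → ℝ) (hx0 : ∀ s : ℤ, s ≤ 0 → x s = 0)
    (hrec : ∀ t : ℤ, 1 ≤ t →
      x t = γ0 + ∑ i ∈ Finset.Icc 1 k, γ i * x (t - i))
    (xstar : ℝ) (hxstar : xstar = γ0 / (1 - Γ)) :
    (∀ t : ℤ, 1 ≤ t →
      0 ≤ xstar - x t ∧
        xstar - x t ≤ γ0 * Γ ^ (⌈((t : ℚ)) / (k : ℚ)⌉).toNat / (1 - Γ)) ∧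
    Summable (fun t : ℕ => xstar - x ((t : ℤ) + 1)) ∧
    ∑' t : ℕ, (xstar - x ((t : ℤ) + 1)) ≤ γ0 * k / (1 - Γ) ^ 2 := by
  have hγ' : ∀ i ∈ Icc 1 k, 0 ≤ γ i := fun i hi => hγ i (mem_Icc.mp hi).1 (mem_Icc.mp hi).2
  have hxstar0 : 0 ≤ xstar := hxstar ▸ div_nonneg hγ0 (by linarith)
  have hfixed : xstar = γ0 + Γ * xstar := by
    rw [hxstar]; field_simp [(by linarith : 1 - Γ ≠ 0)]; ring
  set d : ℤ → ℝ := fun t => xstar - x t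
  have hd_init : ∀ s : ℤ, s ≤ 0 → d s = xstar := fun s hs => by simp [d, hx0 s hs]
  have hd_rec : ∀ t : ℤ, 1 ≤ t → d t = ∑ i ∈ Icc 1 k, γ i * d (t - i) := fun t ht => by
    simp only [d, mul_sub, sum_sub_distrib, ← sum_mul, ← hΓdef, hrec t ht]
    linarith
  have hd_nonneg : ∀ t, 0 ≤ d t :=
    le_of_recurrence_comparison (u := 0) hγ' (by simp) (fun t ht => (hd_rec t ht).ge)
      (fun s hs => (hd_init s hs).symm ▸ hxstar0)
  have hd_le : ∀ t, d t ≤ xstar * Γ ^ blockIndex k t :=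
    le_of_recurrence_comparison hγ' (fun t ht => (hd_rec t ht).le)
      (fun t ht => geometric_blockIndex_supersolution hk hγ' hΓdef hΓ.le hxstar0 ht)
      (fun s hs => by simp [hd_init s hs, blockIndex_of_nonpos k hs])
  have hpartial (n : ℕ) : ∑ t ∈ range n, d (t + 1) ≤ γ0 * k / (1 - Γ) ^ 2 := by
    have := sum_range_le_of_recurrence hγ' hΓdef hΓ hd_nonneg
      (fun s hs => (hd_init s hs).le) (fun t ht => (hd_rec t ht).le) n
    convert this using 1
    rw [hxstar, sq, ← div_div]
    ring
  have hsummable := summable_of_sum_range_le (fun t => hd_nonneg (t + 1)) hpartial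
  refine ⟨fun t _ => ⟨hd_nonneg t, ?_⟩, hsummable, hsummable.tsum_le_of_sum_range_le hpartial⟩
  rw [mul_div_right_comm, ← hxstar]
  exact hd_le t
end
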